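/- arXiv:math/0412513 — 4 statements merged into one kernel-verified Lean document; each statement's English description precedes it below -/
import Mathlib

section
/- If f(t) = b·∏_{i=1}^n (t - α_i) is a nonzero complex polynomial with Mahler measure M(f) = |b|·∏ max(|α_i|, 1), then M(f) is at most the length ||f||, defined as the sum of the absolute values of the coefficients of f. -/
open Polynomial

/-- Mahler measure of a complex polynomial: |leading coeff| times the product
of max(|α|,1) over its roots (with multiplicity). -/
noncomputable def mahlerMeasure' (f : Polynomial ℂ) : ℝ :=
  ‖f.leadingCoeff‖ * (f.roots.map (fun α => max ‖α‖ 1)).prod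

/-- The length of a polynomial: sum of absolute values of its coefficients. -/
noncomputable def polyLength (f : Polynomial ℂ) : ℝ :=
  ∑ i ∈ f.support, ‖f.coeff i‖

theorem mahlerMeasure'_eq_mahlerMeasure (f : Polynomial ℂ) :
    mahlerMeasure' f = f.mahlerMeasure := by
  simp only [mahlerMeasure', mahlerMeasure_eq_leadingCoeff_mul_prod_roots, max_comm]

theorem polyLength_eq_sum_norm_coeff (f : Polynomial ℂ) :
    polyLength f = f.sum fun _ a ↦ ‖a‖ :=
  rfl

theorem mahlerMeasure_le_length_general (f : Polynomial ℂ) :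
    mahlerMeasure' f ≤ polyLength f := by
  rw [mahlerMeasure'_eq_mahlerMeasure, polyLength_eq_sum_norm_coeff]
  exact mahlerMeasure_le_sum_norm_coeff f

theorem mahlerMeasure_le_length (f : Polynomial ℂ) (hf : f ≠ 0) :
    mahlerMeasure' f ≤ polyLength f :=
  mahlerMeasure_le_length_general f
end

section
/- Let f ∈ ℤ[t] be monic with f = 1 + a_1 t + ⋯ and let g = 1 + b_m t^m + ⋯ ∈ ℤ[t] with b_m ≠ 0, m ≥ 1. For each fixed k ≥ 1, the coefficient of t^{km} in f·g^N, viewed as a function of N (for N ≥ k), is a polynomial in N with leading term (b_m^k / k!)·N^k; in particular this coefficient is nonzero for all sufficiently large N. -/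
/-!
Write `g = 1 + X ^ m * q` with `q.coeff 0 = b_m`. By the binomial theorem the coefficient of
`t ^ (k m)` in `f * g ^ N` is `∑ i, (N choose i) * S i` with `S i` the coefficient of `t ^ (k m)`
in `f * (X ^ m * q) ^ i`. Since `(X ^ m * q) ^ i` is divisible by `t ^ (i m)`, only `i ≤ k`
contribute and `S k = f.coeff 0 * b_m ^ k = b_m ^ k`. As `N choose i` is the polynomial
`descPochhammer i / i!` evaluated at `N`, the coefficient is a polynomial in `N` of degree `k`
with leading coefficient `b_m ^ k / k!`, and a nonzero polynomial has only finitely many roots.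
-/

open Polynomial Finset Filter

namespace Polynomial

section CommRing

variable {R : Type*} [CommRing R]

theorem coeff_mul_one_add_pow (f h : R[X]) (N n : ℕ) :
    (f * (1 + h) ^ N).coeff n = ∑ i ∈ range (N + 1), (N.choose i : R) * (f * h ^ i).coeff n := by
  rw [add_comm, add_pow, mul_sum, finsetSum_coeff]
  refine sum_congr rfl fun i _ => ?_
  rw [one_pow, mul_one, ← mul_assoc, coeff_mul_natCast, mul_comm]

theorem coeff_mul_one_add_pow_eq_sum_range {f h : R[X]} {n k : ℕ}
    (hvan : ∀ i, k < i → (f * h ^ i).coeff n = 0) (N : ℕ) :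
    (f * (1 + h) ^ N).coeff n = ∑ i ∈ range (k + 1), (N.choose i : R) * (f * h ^ i).coeff n := by
  have hsub : ∀ j ≤ max N k, range (j + 1) ⊆ range (max N k + 1) := fun j hj =>
    range_subset_range.mpr (by omega)
  rw [coeff_mul_one_add_pow]
  refine (sum_subset (hsub N (le_max_left N k)) fun i _ hi => ?_).trans
    (sum_subset (hsub k (le_max_right N k)) fun i _ hi => ?_).symm
  · rw [Nat.choose_eq_zero_of_lt (by simpa using hi), Nat.cast_zero, zero_mul]
  · rw [hvan i (by simpa using hi), mul_zero]

theorem exists_eq_one_add_X_pow_mul {g : R[X]} {m : ℕ} (hm : m ≠ 0) (hg0 : g.coeff 0 = 1)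
    (hlow : ∀ j, 0 < j → j < m → g.coeff j = 0) :
    ∃ q : R[X], g = 1 + X ^ m * q ∧ q.coeff 0 = g.coeff m := by
  obtain ⟨q, hq⟩ : X ^ m ∣ g - 1 := X_pow_dvd_iff.mpr fun d hd => by
    rcases Nat.eq_zero_or_pos d with rfl | hd0
    · simp [hg0]
    · simp [hlow d hd0 hd, coeff_one, hd0.ne']
  refine ⟨q, by rw [← hq]; ring, ?_⟩
  have hcoeff := coeff_X_pow_mul q m 0
  rwa [zero_add, ← hq, coeff_sub, coeff_one, if_neg hm, sub_zero, eq_comm] at hcoeff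

theorem mul_X_pow_mul_pow (f q : R[X]) (m i : ℕ) :
    f * (X ^ m * q) ^ i = X ^ (i * m) * (f * q ^ i) := by
  rw [mul_pow, ← pow_mul, mul_comm m i]
  ring

theorem coeff_mul_X_pow_mul_pow_of_lt (f q : R[X]) {m n i : ℕ} (h : n < i * m) :
    (f * (X ^ m * q) ^ i).coeff n = 0 := by
  rw [mul_X_pow_mul_pow, coeff_X_pow_mul', if_neg (by omega)]

theorem coeff_mul_X_pow_mul_pow_self (f q : R[X]) (m k : ℕ) :
    (f * (X ^ m * q) ^ k).coeff (k * m) = f.coeff 0 * q.coeff 0 ^ k := by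
  rw [mul_X_pow_mul_pow, coeff_X_pow_mul', if_pos le_rfl, Nat.sub_self, mul_coeff_zero,
    coeff_zero_eq_eval_zero (q ^ k), eval_pow, ← coeff_zero_eq_eval_zero]

theorem eventually_eval_natCast_ne_zero [IsDomain R] [CharZero R] {P : R[X]} (hP : P ≠ 0) :
    ∀ᶠ N : ℕ in atTop, P.eval (N : R) ≠ 0 := by
  have hfin : {N : ℕ | P.IsRoot (N : R)}.Finite :=
    (finite_setOfPred_isRoot hP).preimage Nat.cast_injective.injOn
  rw [← Nat.cofinite_eq_atTop]
  exact hfin.eventually_cofinite_notMem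

end CommRing

section Field

variable {K : Type*} [Field K]

/-- The polynomial `∑_{i ≤ k} a i * (X choose i)`, with `X choose i = descPochhammer i / i!`. -/
noncomputable def binomialCombination (a : ℕ → K) (k : ℕ) : K[X] :=
  ∑ i ∈ range (k + 1), C (a i / i.factorial) * descPochhammer K i

variable (a : ℕ → K) (k : ℕ)

theorem eval_natCast_binomialCombination [CharZero K] (N : ℕ) :
    (binomialCombination a k).eval (N : K) = ∑ i ∈ range (k + 1), (N.choose i : K) * a i := by
  rw [binomialCombination, eval_finsetSum]
  refine sum_congr rfl fun i _ => ?_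
  have hfact : (i.factorial : K) ≠ 0 := Nat.cast_ne_zero.mpr i.factorial_ne_zero
  rw [eval_mul, eval_C, descPochhammer_eval_eq_descFactorial,
    Nat.descFactorial_eq_factorial_mul_choose, Nat.cast_mul]
  field_simp

theorem natDegree_binomialCombination_le : (binomialCombination a k).natDegree ≤ k := by
  refine natDegree_sum_le_of_forall_le _ _ fun i hi => ?_
  refine natDegree_C_mul_le _ _ |>.trans ?_
  rw [descPochhammer_natDegree]
  exact Nat.lt_succ_iff.mp (mem_range.mp hi)

theorem coeff_binomialCombination_self :
    (binomialCombination a k).coeff k = a k / k.factorial := by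
  rw [binomialCombination, finsetSum_coeff, sum_eq_single_of_mem k (self_mem_range_succ k)]
  · have hmonic := (monic_descPochhammer K k).coeff_natDegree
    rw [descPochhammer_natDegree] at hmonic
    rw [coeff_C_mul, hmonic, mul_one]
  · intro i hi hik
    rw [coeff_C_mul, coeff_eq_zero_of_natDegree_lt, mul_zero]
    rw [descPochhammer_natDegree]
    have := mem_range.mp hi
    omega

variable {a k}

theorem coeff_binomialCombination_self_ne_zero [CharZero K] (ha : a k ≠ 0) :
    (binomialCombination a k).coeff k ≠ 0 := by
  rw [coeff_binomialCombination_self]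
  exact div_ne_zero ha (Nat.cast_ne_zero.mpr k.factorial_ne_zero)

theorem natDegree_binomialCombination [CharZero K] (ha : a k ≠ 0) :
    (binomialCombination a k).natDegree = k :=
  (natDegree_binomialCombination_le a k).antisymm
    (le_natDegree_of_ne_zero (coeff_binomialCombination_self_ne_zero ha))

theorem binomialCombination_ne_zero [CharZero K] (ha : a k ≠ 0) : binomialCombination a k ≠ 0 :=
  fun h0 => coeff_binomialCombination_self_ne_zero ha (by rw [h0, coeff_zero])

theorem leadingCoeff_binomialCombination [CharZero K] (ha : a k ≠ 0) :
    (binomialCombination a k).leadingCoeff = a k / k.factorial := by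
  rw [leadingCoeff, natDegree_binomialCombination ha, coeff_binomialCombination_self]

end Field

end Polynomial

theorem coeff_mul_pow_polynomial_in_N_general
    (f g : Polynomial ℤ) (m : ℕ) (bm : ℤ)
    (hf0 : f.coeff 0 = 1) (hg0 : g.coeff 0 = 1)
    (hm : 1 ≤ m) (hbm : bm ≠ 0) (hgm : g.coeff m = bm)
    (hlow : ∀ j, 0 < j → j < m → g.coeff j = 0)
    (k : ℕ) :
    (∃ P : Polynomial ℚ, P.natDegree = k ∧ P.leadingCoeff = (bm : ℚ) ^ k / (k.factorial : ℚ) ∧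
      ∀ N : ℕ, k ≤ N → ((f * g ^ N).coeff (k * m) : ℚ) = P.eval (N : ℚ)) ∧
    (∃ N₀ : ℕ, ∀ N : ℕ, N₀ ≤ N → (f * g ^ N).coeff (k * m) ≠ 0) := by
  obtain ⟨q, hg, hq0⟩ := exists_eq_one_add_X_pow_mul (by omega) hg0 hlow
  set S : ℕ → ℚ := fun i => ((f * (X ^ m * q) ^ i).coeff (k * m) : ℤ)
  have hSk : S k = (bm : ℚ) ^ k := by simp [S, coeff_mul_X_pow_mul_pow_self, hf0, hq0, hgm]
  have hSk0 : S k ≠ 0 := hSk ▸ pow_ne_zero _ (Int.cast_ne_zero.mpr hbm)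
  have hcoeff : ∀ N : ℕ,
      ((f * g ^ N).coeff (k * m) : ℚ) = (binomialCombination S k).eval (N : ℚ) := by
    intro N
    rw [eval_natCast_binomialCombination, hg, coeff_mul_one_add_pow_eq_sum_range
      (fun i hi => coeff_mul_X_pow_mul_pow_of_lt f q (Nat.mul_lt_mul_of_pos_right hi (by omega)))]
    push_cast [S]
    rfl
  refine ⟨⟨binomialCombination S k, natDegree_binomialCombination hSk0,
    hSk ▸ leadingCoeff_binomialCombination hSk0, fun N _ => hcoeff N⟩, ?_⟩
  obtain ⟨N₀, hN₀⟩ :=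
    eventually_atTop.mp (eventually_eval_natCast_ne_zero (binomialCombination_ne_zero hSk0))
  exact ⟨N₀, fun N hN h0 => hN₀ N hN (by rw [← hcoeff, h0, Int.cast_zero])⟩

/-- Let `f, g ∈ ℤ[t]` have constant term 1, and let `b_m t^m` (with `b_m ≠ 0`, `m ≥ 1`)
be the lowest-degree nonconstant term of `g`.  For each fixed `k ≥ 1`, the coefficient
of `t^{k m}` in `f * g ^ N` is, for `N ≥ k`, given by a polynomial in `N` of degree `k`
with leading coefficient `b_m ^ k / k!`; in particular it is nonzero for all
sufficiently large `N`. -/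
theorem coeff_mul_pow_polynomial_in_N
    (f g : Polynomial ℤ) (m : ℕ) (bm : ℤ)
    (hf0 : f.coeff 0 = 1) (hg0 : g.coeff 0 = 1)
    (hm : 1 ≤ m) (hbm : bm ≠ 0) (hgm : g.coeff m = bm)
    (hlow : ∀ j, 0 < j → j < m → g.coeff j = 0)
    (k : ℕ) (hk : 1 ≤ k) :
    (∃ P : Polynomial ℚ, P.natDegree = k ∧ P.leadingCoeff = (bm : ℚ) ^ k / (k.factorial : ℚ) ∧
      ∀ N : ℕ, k ≤ N → ((f * g ^ N).coeff (k * m) : ℚ) = P.eval (N : ℚ)) ∧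
    (∃ N₀ : ℕ, ∀ N : ℕ, N₀ ≤ N → (f * g ^ N).coeff (k * m) ≠ 0) :=
  coeff_mul_pow_polynomial_in_N_general f g m bm hf0 hg0 hm hbm hgm hlow k
end

section
/- For each integer k ≥ 0, the polynomial f_k(x) = 1 − x − x² − x^{2k+2} has exactly one root inside the open unit disk, and that root is real. -/
/-!
On a circle `‖z‖ = ρ` with `4/5 ≤ ρ < 1` and `m ≥ 4` we have
`‖z ^ m‖ = ρ ^ m < ρ ^ 2 + ρ - 1 ≤ ‖1 - z - z ^ 2‖`, so by Rouché's theorem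
`1 - z - z ^ 2 - z ^ m` has as many roots in `‖z‖ < ρ` as `1 - z - z ^ 2`, whose roots are
`-φ` and `-ψ = φ - 1`: exactly one. The intermediate value theorem provides a real root in
`(0, 1)`, and choosing `ρ` beyond it and beyond any other root in the unit disk shows the two
coincide. For polynomials, Rouché's theorem follows from the argument principle: the number of
roots of `p + t • q` inside the circle is `(2πi)⁻¹ ∮ (p + t • q)' / (p + t • q)`, a continuous
integer-valued function of `t ∈ [0, 1]`.
-/

open Polynomial Metric Real goldenRatio

open Classical in
noncomputable def Polynomial.numRootsIn (p : ℂ[X]) (s : Set ℂ) : ℕ :=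
  Multiset.card (p.roots.filter (· ∈ s))

section ArgumentPrinciple

open Classical

variable {c : ℂ} {R : ℝ}

theorem circleIntegral_sub_inv_of_notMem_closedBall (hR : 0 ≤ R) {a : ℂ}
    (ha : a ∉ closedBall c R) : ∮ z in C(c, R), (z - a)⁻¹ = 0 := by
  refine DiffContOnCl.circleIntegral_eq_zero hR <|
    ((differentiableOn_id.sub_const a).inv fun z hz => ?_).diffContOnCl_ball subset_rfl
  exact sub_ne_zero.2 (ne_of_mem_of_not_mem hz ha)

theorem circleIntegral_multiset_sum_sub_inv (hR : 0 ≤ R) {S : Multiset ℂ}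
    (hS : ∀ a ∈ S, a ∉ sphere c R) :
    ∮ z in C(c, R), (S.map fun a => (z - a)⁻¹).sum =
      2 * π * Complex.I * Multiset.card (S.filter (· ∈ ball c R)) := by
  induction S using Multiset.induction with
  | empty => simp [circleIntegral]
  | cons a S ih =>
    have ha := hS a (Multiset.mem_cons_self a S)
    have hS' : ∀ b ∈ S, b ∉ sphere c R := fun b hb => hS b (Multiset.mem_cons_of_mem hb)
    have hint : ∀ b ∉ sphere c R, ContinuousOn (fun z => (z - b)⁻¹) (sphere c R) :=
      fun b hb => (continuousOn_id.sub continuousOn_const).inv₀ fun z hz =>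
        sub_ne_zero.2 (ne_of_mem_of_not_mem hz hb)
    have hsum : CircleIntegrable (fun z => (S.map fun b => (z - b)⁻¹).sum) c R :=
      (continuousOn_multiset_sum S fun b hb => hint b (hS' b hb)).circleIntegrable hR
    simp only [Multiset.map_cons, Multiset.sum_cons, Multiset.filter_cons]
    rw [circleIntegral.integral_add ((hint a ha).circleIntegrable hR) hsum, ih hS']
    by_cases hab : a ∈ ball c R
    · rw [circleIntegral.integral_sub_inv_of_mem_ball hab, if_pos hab, Multiset.card_add,
        Multiset.card_singleton]
      push_cast
      ring
    · have hac : a ∉ closedBall c R := by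
        rw [← ball_union_sphere]
        exact fun h => h.elim hab ha
      rw [circleIntegral_sub_inv_of_notMem_closedBall hR hac, if_neg hab]
      simp

theorem circleIntegral_derivative_div_eq_numRootsIn (hR : 0 ≤ R) {p : ℂ[X]}
    (hp : ∀ z ∈ sphere c R, p.eval z ≠ 0) :
    ∮ z in C(c, R), p.derivative.eval z / p.eval z =
      2 * π * Complex.I * p.numRootsIn (ball c R) := by
  rw [circleIntegral.integral_congr hR fun z hz =>
    (IsAlgClosed.splits p).eval_derivative_div_eval_of_ne_zero (hp z hz)]
  simp only [one_div]
  exact circleIntegral_multiset_sum_sub_inv hR fun a ha haR => hp a haR (mem_roots'.1 ha).2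

end ArgumentPrinciple

section Rouche

variable {c : ℂ} {R : ℝ}

theorem add_real_mul_ne_zero_of_norm_lt {a b : ℂ} (h : ‖b‖ < ‖a‖) {t : ℝ}
    (ht : t ∈ unitInterval) : a + t * b ≠ 0 := by
  intro h0
  have : ‖(t : ℂ) * b‖ ≤ ‖b‖ := by
    rw [norm_mul, Complex.norm_real, Real.norm_of_nonneg ht.1]
    exact mul_le_of_le_one_left (norm_nonneg b) ht.2
  rw [add_eq_zero_iff_eq_neg.1 h0, norm_neg] at h
  linarith

theorem numRootsIn_add_eq_of_norm_lt (hR : 0 < R) {p q : ℂ[X]}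
    (h : ∀ z ∈ sphere c R, ‖q.eval z‖ < ‖p.eval z‖) :
    (p + q).numRootsIn (ball c R) = p.numRootsIn (ball c R) := by
  set P : unitInterval → ℂ[X] := fun t => p + C ((t : ℝ) : ℂ) * q
  have hP : ∀ t z, (P t).eval z = p.eval z + t * q.eval z := by simp [P]
  have hP' : ∀ t z,
      (P t).derivative.eval z = p.derivative.eval z + t * q.derivative.eval z := by
    simp [P]
  have hne : ∀ t, ∀ z ∈ sphere c R, (P t).eval z ≠ 0 := fun t z hz =>
    hP t z ▸ add_real_mul_ne_zero_of_norm_lt (h z hz) t.2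
  have hint : Continuous fun t => ∮ z in C(c, R), (P t).derivative.eval z / (P t).eval z := by
    refine intervalIntegral.continuous_parametric_intervalIntegral_of_continuous' ?_ _ _
    simp only [deriv_circleMap, hP, hP']
    refine ((continuous_circleMap 0 R).comp continuous_snd).mul continuous_const |>.smul ?_
    exact Continuous.div (by fun_prop) (by fun_prop)
      fun x => hP x.1 _ ▸ hne x.1 _ (circleMap_mem_sphere c hR.le x.2)
  have hN : Continuous fun t => (P t).numRootsIn (ball c R) := by
    rw [(Complex.isUniformEmbedding_ofReal.comp
      Nat.isUniformEmbedding_coe_real).isEmbedding.continuous_iff]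
    convert hint.const_mul (2 * π * Complex.I)⁻¹ with t
    rw [circleIntegral_derivative_div_eq_numRootsIn hR.le (hne t)]
    field_simp
    simp
  simpa [P] using PreconnectedSpace.constant inferInstance hN (x := 1) (y := 0)

end Rouche

theorem Polynomial.eq_of_numRootsIn_eq_one {p : ℂ[X]} {s : Set ℂ} (h : p.numRootsIn s = 1)
    {z w : ℂ} (hz : p.IsRoot z) (hzs : z ∈ s) (hw : p.IsRoot w) (hws : w ∈ s) : z = w := by
  classical
  have hp : p ≠ 0 := by
    rintro rfl
    simp [numRootsIn] at h
  obtain ⟨a, ha⟩ := Multiset.card_eq_one.1 h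
  have hmem : ∀ x, p.IsRoot x → x ∈ s → x = a := fun x hx hxs => by
    have hx' := Multiset.mem_filter.2 ⟨(mem_roots hp).2 hx, hxs⟩
    rwa [ha, Multiset.mem_singleton] at hx'
  rw [hmem z hz hzs, hmem w hw hws]

theorem sq_add_self_sub_one_le_norm_one_sub_sub_sq {z : ℂ} (hz : ‖z‖ ≤ 1) :
    ‖z‖ ^ 2 + ‖z‖ - 1 ≤ ‖1 - z - z ^ 2‖ := by
  set ρ := ‖z‖
  rcases le_or_gt (ρ ^ 2 + ρ - 1) 0 with h | h
  · exact h.trans (norm_nonneg _)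
  have hρ : ρ ^ 2 = z.re ^ 2 + z.im ^ 2 := by
    rw [Complex.sq_norm, Complex.normSq_apply]
    ring
  have hw : ‖1 - z - z ^ 2‖ ^ 2 =
      (1 - z.re - z.re ^ 2 + z.im ^ 2) ^ 2 + (z.im + 2 * z.re * z.im) ^ 2 := by
    rw [Complex.sq_norm, Complex.normSq_apply]
    simp only [pow_two, Complex.sub_re, Complex.sub_im, Complex.mul_re, Complex.mul_im,
      Complex.one_re, Complex.one_im]
    ring
  obtain ⟨hre', hre⟩ := abs_le.1 (Complex.abs_re_le_norm z)
  rw [← pow_le_pow_iff_left₀ h.le (norm_nonneg _) two_ne_zero, hw]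
  -- the minimum over the circle `‖z‖ = ρ` is attained at `z = ρ`
  nlinarith [mul_nonneg (sub_nonneg.2 hre) (by nlinarith : 0 ≤ 4 * z.re + 4 * ρ + 2 - 2 * ρ ^ 2)]

theorem numRootsIn_one_sub_X_sub_X_sq {ρ : ℝ} (h₁ : -ψ < ρ) (h₂ : ρ ≤ φ) :
    (1 - X - X ^ 2 : ℂ[X]).numRootsIn (ball 0 ρ) = 1 := by
  have hsum : (C (φ : ℂ) + C (ψ : ℂ) : ℂ[X]) = 1 := by
    rw [← C_add, ← Complex.ofReal_add, goldenRatio_add_goldenConj, Complex.ofReal_one, C_1]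
  have hprod : (C (φ : ℂ) * C (ψ : ℂ) : ℂ[X]) = -1 := by
    rw [← C_mul, ← Complex.ofReal_mul, goldenRatio_mul_goldenConj]
    simp
  have hfac : (1 - X - X ^ 2 : ℂ[X]) = C (-1) * ((X - C (-(φ : ℂ))) * (X - C (-(ψ : ℂ)))) := by
    simp only [C_neg, C_1]
    linear_combination (X : ℂ[X]) * hsum + hprod
  rw [numRootsIn, hfac, roots_C_mul _ (by norm_num), roots_mul (mul_ne_zero (X_sub_C_ne_zero _)
    (X_sub_C_ne_zero _)), roots_X_sub_C, roots_X_sub_C]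
  have hφ : -(φ : ℂ) ∉ ball 0 ρ := by
    rw [mem_ball_zero_iff, norm_neg, Complex.norm_real, Real.norm_of_nonneg goldenRatio_pos.le]
    exact not_lt.2 h₂
  have hψ : -(ψ : ℂ) ∈ ball 0 ρ := by
    rw [mem_ball_zero_iff, norm_neg, Complex.norm_real, Real.norm_of_nonpos goldenConj_neg.le]
    exact h₁
  simp only [Multiset.filter_add, Multiset.filter_singleton, hφ, hψ, if_false, if_true,
    Multiset.empty_eq_zero, zero_add, Multiset.card_singleton]

theorem pow_lt_sq_add_self_sub_one {m : ℕ} (hm : 4 ≤ m) {ρ : ℝ} (h₀ : 4 / 5 ≤ ρ) (h₁ : ρ < 1) :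
    ρ ^ m < ρ ^ 2 + ρ - 1 := by
  have hpow : ρ ^ m ≤ ρ ^ 4 := pow_le_pow_of_le_one (by linarith) h₁.le hm
  -- `ρ ^ 2 + ρ - 1 - ρ ^ 4 = (1 - ρ) * (ρ ^ 3 + ρ ^ 2 - 1)`
  nlinarith [mul_pos (sub_pos.2 h₁) (by nlinarith : 0 < ρ ^ 3 + ρ ^ 2 - 1)]

theorem neg_goldenConj_lt_four_fifths : -ψ < 4 / 5 := by
  rw [goldenConj]
  nlinarith [Real.sq_sqrt (show (0 : ℝ) ≤ 5 by norm_num), Real.sqrt_nonneg 5]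

theorem numRootsIn_one_sub_X_sub_X_sq_sub_X_pow {m : ℕ} (hm : 4 ≤ m) {ρ : ℝ} (h₀ : 4 / 5 ≤ ρ)
    (h₁ : ρ < 1) : (1 - X - X ^ 2 - X ^ m : ℂ[X]).numRootsIn (ball 0 ρ) = 1 := by
  rw [sub_eq_add_neg, numRootsIn_add_eq_of_norm_lt (by linarith)]
  · exact numRootsIn_one_sub_X_sub_X_sq (by linarith [neg_goldenConj_lt_four_fifths])
      (by linarith [one_lt_goldenRatio])
  · intro z hz
    rw [mem_sphere_zero_iff_norm] at hz
    simp only [eval_neg, eval_pow, eval_X, eval_sub, eval_one, norm_neg, norm_pow, hz]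
    calc ρ ^ m < ρ ^ 2 + ρ - 1 := pow_lt_sq_add_self_sub_one hm h₀ h₁
      _ ≤ ‖1 - z - z ^ 2‖ := hz ▸ sq_add_self_sub_one_le_norm_one_sub_sub_sq (by linarith)

theorem exists_root_mem_Ioo_one_sub_sub_sq_sub_pow {m : ℕ} (hm : m ≠ 0) :
    ∃ r ∈ Set.Ioo (0 : ℝ) 1, 1 - r - r ^ 2 - r ^ m = 0 :=
  intermediate_value_Ioo' zero_le_one (by fun_prop)
    ⟨by norm_num, by simp [zero_pow hm]⟩

theorem exists_real_root_unique_in_unitDisc {m : ℕ} (hm : 4 ≤ m) :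
    ∃ x : ℝ, |x| < 1 ∧ (1 - X - X ^ 2 - X ^ m : ℂ[X]).eval (x : ℂ) = 0 ∧
      ∀ z : ℂ, (1 - X - X ^ 2 - X ^ m : ℂ[X]).eval z = 0 → ‖z‖ < 1 → z = (x : ℂ) := by
  obtain ⟨r, ⟨hr0, hr1⟩, hr⟩ := exists_root_mem_Ioo_one_sub_sub_sq_sub_pow (by omega : m ≠ 0)
  have hrC : (1 - X - X ^ 2 - X ^ m : ℂ[X]).eval (r : ℂ) = 0 := by
    simp only [eval_sub, eval_one, eval_X, eval_pow]
    exact_mod_cast hr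
  refine ⟨r, abs_lt.2 ⟨by linarith, hr1⟩, hrC, fun z hz hz1 => ?_⟩
  obtain ⟨ρ, hρ, hρ1⟩ := exists_between (max_lt (max_lt hz1 hr1) (by norm_num : (4 / 5 : ℝ) < 1))
  simp only [max_lt_iff] at hρ
  refine eq_of_numRootsIn_eq_one (numRootsIn_one_sub_X_sub_X_sq_sub_X_pow hm hρ.2.le hρ1)
    hz (mem_ball_zero_iff.2 hρ.1.1) hrC (mem_ball_zero_iff.2 ?_)
  rw [Complex.norm_real, Real.norm_of_nonneg hr0.le]
  exact hρ.1.2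

/-- For each `k ≥ 0`, the polynomial `f_k(x) = 1 - x - x² - x^{2k+2}` has exactly one
root in the open unit disk, and that root is real. -/
theorem unique_real_root_in_disk (k : ℕ) :
    ∃ x : ℝ, |x| < 1 ∧
      (1 - X - X ^ 2 - X ^ (2 * k + 2) : Polynomial ℂ).eval (x : ℂ) = 0 ∧
      ∀ z : ℂ, (1 - X - X ^ 2 - X ^ (2 * k + 2) : Polynomial ℂ).eval z = 0 →
        ‖z‖ < 1 → z = (x : ℂ) := by
  rcases k with _ | k
  -- `f_0 = (1 + X) * (1 - 2 * X)` has its second root on the unit circle, out of Rouché's reach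
  · refine ⟨1 / 2, by norm_num [abs_of_pos], by norm_num, fun z hz hz1 => ?_⟩
    simp only [eval_sub, eval_one, eval_X, eval_pow] at hz
    have hfac : (1 + z) * (1 - 2 * z) = 0 := by linear_combination hz
    rcases mul_eq_zero.1 hfac with h | h
    · rw [eq_neg_of_add_eq_zero_right h, norm_neg, norm_one] at hz1
      exact absurd hz1 (lt_irrefl 1)
    · push_cast
      linear_combination -h / 2
  · exact exists_real_root_unique_in_unitDisc (by omega)
end

section
/- Lehmer's polynomial L(t) = t^{10} + t^9 − t^7 − t^6 − t^5 − t^4 − t^3 + t + 1 has exactly one root of modulus greater than 1, and this root is real and lies in the interval (1.17, 1.18). -/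
/-!
Lehmer's polynomial is palindromic, so `L(z) = z⁵ Q(z + z⁻¹)` with
`Q(y) = y⁵ + y⁴ - 5y³ - 5y² + 4y + 3`. Sign changes locate four real roots of `Q` in `(-2, 2)`,
and `β = α + α⁻¹ > 2` is a fifth one, where `α ∈ (1.17, 1.18)` is a real root of `L`; so these are
all the roots of `Q`. If `L(z) = 0` with `|z| > 1`, then `z + z⁻¹` is real, and since
`Im (z + z⁻¹) = Im z · (1 - |z|⁻²)`, so is `z`. A real `x` with `|x| > 1` has `|x + x⁻¹| > 2`,
hence `z + z⁻¹ = β`, and `z + z⁻¹ = α + α⁻¹` with `|z| > 1` forces `z = α`.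
-/

open Polynomial

/-- Lehmer's polynomial `L(t) = t¹⁰ + t⁹ - t⁷ - t⁶ - t⁵ - t⁴ - t³ + t + 1` over `ℂ`. -/
noncomputable def Lehmer : Polynomial ℂ :=
  X ^ 10 + X ^ 9 - X ^ 7 - X ^ 6 - X ^ 5 - X ^ 4 - X ^ 3 + X + 1

open Function Finset

theorem Polynomial.exists_algebraMap_eq_of_aeval_eq_zero {K L : Type*} [Field K] [CommRing L]
    [IsDomain L] [Algebra K L] {p : K[X]} (hp : p ≠ 0) {n : ℕ} (hn : p.natDegree ≤ n)
    {r : Fin n → K} (hr : Injective r) (hroot : ∀ i, p.eval (r i) = 0) {z : L}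
    (hz : aeval z p = 0) : ∃ i, algebraMap K L (r i) = z := by
  classical
  set s : Finset L := univ.image (algebraMap K L ∘ r)
  have hs : s ⊆ (p.aroots L).toFinset := by
    intro y hy
    obtain ⟨i, -, rfl⟩ := mem_image.mp hy
    simp [hp, aeval_algebraMap_apply_eq_algebraMap_eval, hroot]
  have hcard : (p.aroots L).toFinset.card ≤ s.card := by
    rw [card_image_of_injective _ ((algebraMap K L).injective.comp hr), card_univ, Fintype.card_fin]
    calc _ ≤ Multiset.card (p.aroots L) := Multiset.toFinset_card_le _
      _ ≤ (p.map (algebraMap K L)).natDegree := card_roots' _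
      _ ≤ n := (natDegree_map _).trans_le hn
  have hzs : z ∈ (p.aroots L).toFinset := by simp [hp, hz]
  rw [← eq_of_subset_of_card_le hs hcard] at hzs
  simpa [s] using hzs

theorem exists_mem_Ioo_eq_zero_of_mul_neg {f : ℝ → ℝ} {a b : ℝ} (hab : a ≤ b)
    (hf : ContinuousOn f (Set.Icc a b)) (h : f a * f b < 0) : ∃ c ∈ Set.Ioo a b, f c = 0 := by
  rcases mul_neg_iff.mp h with ⟨ha, hb⟩ | ⟨ha, hb⟩
  · exact intermediate_value_Ioo' hab hf ⟨hb, ha⟩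
  · exact intermediate_value_Ioo hab hf ⟨ha, hb⟩

theorem Complex.im_add_inv (z : ℂ) : (z + z⁻¹).im = z.im * (1 - (normSq z)⁻¹) := by
  simp only [add_im, inv_im]; ring

theorem Complex.im_eq_zero_of_im_add_inv_eq_zero {z : ℂ} (hz : ‖z‖ ≠ 1)
    (h : (z + z⁻¹).im = 0) : z.im = 0 := by
  have hn : normSq z ≠ 1 := by
    rw [← Complex.sq_norm]; intro h1; exact hz (by nlinarith [norm_nonneg z])
  rw [im_add_inv] at h
  refine (mul_eq_zero.mp h).resolve_right ?_
  exact fun h1 => hn (inv_eq_one.mp (sub_eq_zero.mp h1).symm)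

theorem Complex.exists_ofReal_of_add_inv_eq_ofReal {z : ℂ} (hz : 1 < ‖z‖) {r : ℝ}
    (h : z + z⁻¹ = r) : ∃ x : ℝ, z = x ∧ 1 < |x| ∧ x + x⁻¹ = r := by
  have him : z.im = 0 := im_eq_zero_of_im_add_inv_eq_zero hz.ne' (by simp [h])
  have hzx : z = (z.re : ℂ) := Complex.ext rfl (by simpa using him)
  refine ⟨z.re, hzx, ?_, ?_⟩
  · rwa [hzx, norm_real, Real.norm_eq_abs] at hz
  · rw [hzx] at h; exact_mod_cast h

theorem two_lt_abs_add_inv {x : ℝ} (hx : 1 < |x|) : 2 < |x + x⁻¹| := by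
  have hx0 : x ≠ 0 := abs_pos.mp (by linarith)
  have hinv : x * x⁻¹ = 1 := mul_inv_cancel₀ hx0
  rcases lt_abs.mp hx with hx | hx
  · rw [abs_of_pos (by positivity)]; nlinarith [sq_nonneg (x - 1)]
  · have : x⁻¹ < 0 := inv_lt_zero.mpr (by linarith)
    rw [abs_of_neg (by linarith)]; nlinarith [sq_nonneg (x + 1)]

theorem eq_of_add_inv_eq_add_inv {x a : ℝ} (hx : 1 < |x|) (ha : 1 < a)
    (h : x + x⁻¹ = a + a⁻¹) : x = a := by
  have hx0 : x ≠ 0 := abs_pos.mp (by linarith)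
  have hfac : (x - a) * (x * a - 1) = 0 := by
    field_simp at h; linear_combination h
  rcases mul_eq_zero.mp hfac with h | h
  · linarith
  · rcases lt_abs.mp hx with hx | hx <;> nlinarith

noncomputable def lehmerTrace : ℝ[X] := X ^ 5 + X ^ 4 - C 5 * X ^ 3 - C 5 * X ^ 2 + C 4 * X + C 3

theorem lehmerTrace_natDegree : lehmerTrace.natDegree = 5 := by
  unfold lehmerTrace; compute_degree!

theorem lehmer_eval_eq_mul_aeval_lehmerTrace {z : ℂ} (hz : z ≠ 0) :
    Lehmer.eval z = z ^ 5 * aeval (z + z⁻¹) lehmerTrace := by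
  simp [Lehmer, lehmerTrace]
  field_simp
  ring

theorem lehmer_eval_ofReal (x : ℝ) :
    Lehmer.eval (x : ℂ) =
      ((x ^ 10 + x ^ 9 - x ^ 7 - x ^ 6 - x ^ 5 - x ^ 4 - x ^ 3 + x + 1 : ℝ) : ℂ) := by
  simp [Lehmer]

theorem lehmer_eval_eq_zero_iff {z : ℂ} (hz : z ≠ 0) :
    Lehmer.eval z = 0 ↔ aeval (z + z⁻¹) lehmerTrace = 0 := by
  rw [lehmer_eval_eq_mul_aeval_lehmerTrace hz, mul_eq_zero, or_iff_right (pow_ne_zero 5 hz)]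

theorem eq_or_exists_abs_lt_two_of_aeval_lehmerTrace_eq_zero {β : ℝ} (hβ : 2 < β)
    (hβroot : lehmerTrace.eval β = 0) {y : ℂ} (hy : aeval y lehmerTrace = 0) :
    y = β ∨ ∃ r : ℝ, |r| < 2 ∧ y = r := by
  have ivt (a b : ℝ) (hab : a ≤ b) (h : lehmerTrace.eval a * lehmerTrace.eval b < 0) :
      ∃ c ∈ Set.Ioo a b, lehmerTrace.eval c = 0 :=
    exists_mem_Ioo_eq_zero_of_mul_neg hab lehmerTrace.continuousOn h
  obtain ⟨y₁, ⟨hy₁, hy₁'⟩, h₁⟩ := ivt (-2) (-1.8) (by norm_num) (by norm_num [lehmerTrace])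
  obtain ⟨y₂, ⟨hy₂, hy₂'⟩, h₂⟩ := ivt (-1.5) (-1) (by norm_num) (by norm_num [lehmerTrace])
  obtain ⟨y₃, ⟨hy₃, hy₃'⟩, h₃⟩ := ivt (-1) 0 (by norm_num) (by norm_num [lehmerTrace])
  obtain ⟨y₄, ⟨hy₄, hy₄'⟩, h₄⟩ := ivt 0 1 (by norm_num) (by norm_num [lehmerTrace])
  have hmono : StrictMono ![y₁, y₂, y₃, y₄, β] := by
    refine Fin.strictMono_iff_lt_succ.mpr fun i => ?_
    fin_cases i <;> simp <;> linarith
  have hne : lehmerTrace ≠ 0 := by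
    intro h; simpa [h] using lehmerTrace_natDegree
  obtain ⟨i, hi⟩ := exists_algebraMap_eq_of_aeval_eq_zero hne lehmerTrace_natDegree.le
    hmono.injective (by simp [Fin.forall_fin_succ, *]) hy
  fin_cases i
  all_goals first
    | exact Or.inl hi.symm
    | exact Or.inr ⟨_, abs_lt.mpr ⟨by simp; linarith, by simp; linarith⟩, hi.symm⟩

/-- Lehmer's polynomial has exactly one root of modulus greater than 1; this root is
real and lies in the interval `(1.17, 1.18)`. -/
theorem lehmer_unique_large_root :
    ∃ α : ℝ, 1.17 < α ∧ α < 1.18 ∧ Lehmer.eval (α : ℂ) = 0 ∧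
      ∀ z : ℂ, Lehmer.eval z = 0 → 1 < ‖z‖ → z = (α : ℂ) := by
  obtain ⟨α, ⟨hα₁, hα₂⟩, hα⟩ := exists_mem_Ioo_eq_zero_of_mul_neg (a := 1.17) (b := 1.18)
    (f := fun x => x ^ 10 + x ^ 9 - x ^ 7 - x ^ 6 - x ^ 5 - x ^ 4 - x ^ 3 + x + 1)
    (by norm_num) (by fun_prop) (by norm_num)
  have hα₀ : (α : ℂ) ≠ 0 := by exact_mod_cast (show α ≠ 0 by linarith)
  have hLα : Lehmer.eval (α : ℂ) = 0 := by rw [lehmer_eval_ofReal, hα, Complex.ofReal_zero]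
  have hβ : lehmerTrace.eval (α + α⁻¹) = 0 := by
    have := (lehmer_eval_eq_zero_iff hα₀).mp hLα
    rwa [← Complex.ofReal_inv, ← Complex.ofReal_add, ← Complex.coe_algebraMap,
      aeval_algebraMap_apply_eq_algebraMap_eval, Complex.coe_algebraMap,
      Complex.ofReal_eq_zero] at this
  have hαabs : 1 < |α| := by rw [abs_of_pos (by linarith)]; linarith
  have hβ₂ : 2 < α + α⁻¹ := (two_lt_abs_add_inv hαabs).trans_eq (abs_of_pos (by positivity))
  refine ⟨α, hα₁, hα₂, hLα, fun z hz hnorm => ?_⟩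
  have hz₀ : z ≠ 0 := norm_pos_iff.mp (by linarith)
  rcases eq_or_exists_abs_lt_two_of_aeval_lehmerTrace_eq_zero hβ₂ hβ
    ((lehmer_eval_eq_zero_iff hz₀).mp hz) with hy | ⟨r, hr, hy⟩
  · obtain ⟨x, rfl, hx, hxα⟩ := Complex.exists_ofReal_of_add_inv_eq_ofReal hnorm hy
    rw [eq_of_add_inv_eq_add_inv hx (by linarith) hxα]
  · obtain ⟨x, -, hx, hxr⟩ := Complex.exists_ofReal_of_add_inv_eq_ofReal hnorm hy
    exact absurd (two_lt_abs_add_inv hx) (by rw [hxr]; linarith)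
end
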